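/- Let d, n be positive integers with gcd(d,n) = 1, let r be an integer, and let a, b, c, e be indeterminates. Let m₁ be the integer with 0 ≤ m₁ ≤ n−1 and d·m₁ ≡ −r (mod n). Then, modulo [n], one has Σ_{k=0}^{m₁} [2dk+r] · (q^r, cq^r, eq^r, q^r/b, aq^r, q^r/a; q^d)_k / (q^d, q^d/c, q^d/e, q^d b, q^d/a, aq^d; q^d)_k · (b/(ce))^k · q^{(2d−3r)k} ≡ 0. -/

import Mathlib

/-- The q-shifted factorial `(a; q)_k = (1-a)(1-aq)⋯(1-aq^{k-1})`. -/
noncomputable def qPoch {K : Type*} [Field K] (a q : K) (k : ℕ) : K :=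
  ∏ i ∈ Finset.range k, (1 - a * q ^ i)

/-- The q-integer `[m]_q = (1 - q^m)/(1 - q)` for an integer `m`. -/
noncomputable def qIntZ {K : Type*} [Field K] (m : ℤ) (q : K) : K :=
  (1 - q ^ m) / (1 - q)

/-- `A ≡ B (mod P)`: written as a reduced fraction of polynomials, the numerator of
`A - B` is divisible by `P`. -/
def fracCongr {R K : Type*} [CommRing R] [Field K] [Algebra R K] (A B : K) (P : R) : Prop :=
  ∃ f g : R, IsRelPrime g P ∧ P ∣ f ∧
    A - B = algebraMap R K f / algebraMap R K g

/-- The field of rational functions in the five indeterminates `q, a, b, c, e`. -/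
noncomputable abbrev K5 : Type := FractionRing (MvPolynomial (Fin 5) ℚ)

noncomputable def q : K5 := algebraMap (MvPolynomial (Fin 5) ℚ) K5 (MvPolynomial.X 0)
noncomputable def a : K5 := algebraMap (MvPolynomial (Fin 5) ℚ) K5 (MvPolynomial.X 1)
noncomputable def b : K5 := algebraMap (MvPolynomial (Fin 5) ℚ) K5 (MvPolynomial.X 2)
noncomputable def c : K5 := algebraMap (MvPolynomial (Fin 5) ℚ) K5 (MvPolynomial.X 3)
noncomputable def e : K5 := algebraMap (MvPolynomial (Fin 5) ℚ) K5 (MvPolynomial.X 4)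

/-- The summand of Lemma 1/2: `[2dk+r]·(q^r,cq^r,eq^r,q^r/b,aq^r,q^r/a;q^d)_k /
(q^d,q^d/c,q^d/e,q^d b,q^d/a,aq^d;q^d)_k · (b/(ce))^k · q^{(2d−3r)k}`. -/
noncomputable def lemmaTerm (dd : ℕ) (r : ℤ) (k : ℕ) : K5 :=
  qIntZ (2 * dd * k + r) q *
    (qPoch (q ^ r) (q ^ dd) k * qPoch (c * q ^ r) (q ^ dd) k * qPoch (e * q ^ r) (q ^ dd) k *
      qPoch (q ^ r / b) (q ^ dd) k * qPoch (a * q ^ r) (q ^ dd) k *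
      qPoch (q ^ r / a) (q ^ dd) k) /
    (qPoch (q ^ dd) (q ^ dd) k * qPoch (q ^ dd / c) (q ^ dd) k * qPoch (q ^ dd / e) (q ^ dd) k *
      qPoch (q ^ dd * b) (q ^ dd) k * qPoch (q ^ dd / a) (q ^ dd) k *
      qPoch (a * q ^ dd) (q ^ dd) k) *
    (b / (c * e)) ^ k * q ^ ((2 * dd - 3 * r) * k)

/-!
Since `∑_{i<n} q^i = ∏_{1 < N ∣ n} Φ_N(q)` with pairwise coprime prime factors, it suffices to
show that the sum vanishes in the localization of `ℚ[q, a, b, c, e]` at each `Φ_N(q)`, that is,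
"at `q = ζ_N`". Let `m ≡ m₁ (mod N)` with `0 ≤ m < N`, so that `N ∣ dm + r`. The summand is
`[2dk+r] ∏ⱼ (xⱼq^r; q^d)_k / (q^d/xⱼ; q^d)_k · (b q^{2d-3r}/(ce))^k` with
`x = (1, c, e, 1/b, a, 1/a)`, and every factor with `xⱼ ≠ 1` is a local unit. The factor
`(q^r; q^d)_k / (q^d; q^d)_k` is integral, and vanishes when `k mod N > m`. Two indices `k`,
`k + t` of one block of `N` consecutive integers whose residues add up to `m` are paired: as
`q^{E₁} ≡ q^{-E₂}` when `N ∣ E₁ + E₂`, reflecting the factors between them shows that the two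
summands cancel modulo `Φ_N`. So twice the sum vanishes.
-/

open Finset

section LocalCalculus

variable {R K : Type*} [CommRing R] [Field K] [Algebra R K] [IsFractionRing R K] {P : R}

theorem algebraMap_ne_zero_of_not_dvd {f : R} (hf : ¬ P ∣ f) : algebraMap R K f ≠ 0 :=
  IsFractionRing.to_map_eq_zero_iff.not.mpr fun h => hf (h ▸ dvd_zero P)

variable [hP : Fact (Prime P)]

theorem algebraMap_prime_ne_zero : algebraMap R K P ≠ 0 :=
  IsFractionRing.to_map_eq_zero_iff.not.mpr hP.out.ne_zero

variable [IsDomain R]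

instance Ideal.isPrime_span_singleton_of_fact (P : R) [Fact (Prime P)] :
    (Ideal.span {P}).IsPrime :=
  (Ideal.span_singleton_prime (Fact.out : Prime P).ne_zero).mpr Fact.out

variable (K) in
noncomputable def localSubalgebra (P : R) [Fact (Prime P)] : Subalgebra R K :=
  Localization.subalgebra.ofField K (Ideal.span {P}).primeCompl
    (Ideal.primeCompl_le_nonZeroDivisors _)

theorem mem_localSubalgebra {x : K} :
    x ∈ localSubalgebra K P ↔
      ∃ f g : R, ¬ P ∣ g ∧ x = algebraMap R K f / algebraMap R K g := by
  rw [localSubalgebra, Localization.subalgebra.ofField, ← SetLike.mem_coe, Subalgebra.coe_copy]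
  simp [Ideal.primeCompl, Ideal.mem_span_singleton, div_eq_mul_inv]

theorem div_mem_localSubalgebra (f : R) {g : R} (hg : ¬ P ∣ g) :
    algebraMap R K f / algebraMap R K g ∈ localSubalgebra K P :=
  mem_localSubalgebra.mpr ⟨f, g, hg, rfl⟩

variable (P) in
structure IsUnitAt (x : K) : Prop where
  ne_zero : x ≠ 0
  mem : x ∈ localSubalgebra K P
  inv_mem : x⁻¹ ∈ localSubalgebra K P

variable (P) in
def VanishesAt (x : K) : Prop := x / algebraMap R K P ∈ localSubalgebra K P

variable (P) in
def CongrAt (x y : K) : Prop := VanishesAt P (x - y)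

namespace IsUnitAt

theorem of_not_dvd {f g : R} (hf : ¬ P ∣ f) (hg : ¬ P ∣ g) :
    IsUnitAt P (algebraMap R K f / algebraMap R K g) :=
  ⟨div_ne_zero (algebraMap_ne_zero_of_not_dvd hf) (algebraMap_ne_zero_of_not_dvd hg),
    div_mem_localSubalgebra f hg, by rw [inv_div]; exact div_mem_localSubalgebra g hf⟩

theorem algebraMap {f : R} (hf : ¬ P ∣ f) : IsUnitAt P (algebraMap R K f) := by
  simpa using of_not_dvd (K := K) hf hP.out.not_dvd_one

theorem one : IsUnitAt P (1 : K) := by simpa using algebraMap (K := K) hP.out.not_dvd_one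

variable {x y : K}

theorem inv (hx : IsUnitAt P x) : IsUnitAt P x⁻¹ :=
  ⟨inv_ne_zero hx.ne_zero, hx.inv_mem, by rw [inv_inv]; exact hx.mem⟩

theorem mul (hx : IsUnitAt P x) (hy : IsUnitAt P y) : IsUnitAt P (x * y) :=
  ⟨mul_ne_zero hx.ne_zero hy.ne_zero, mul_mem hx.mem hy.mem,
    by rw [mul_inv]; exact mul_mem hx.inv_mem hy.inv_mem⟩

theorem neg (hx : IsUnitAt P x) : IsUnitAt P (-x) :=
  ⟨neg_ne_zero.mpr hx.ne_zero, neg_mem hx.mem, by rw [inv_neg]; exact neg_mem hx.inv_mem⟩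

theorem div (hx : IsUnitAt P x) (hy : IsUnitAt P y) : IsUnitAt P (x / y) := by
  rw [div_eq_mul_inv]; exact hx.mul hy.inv

theorem pow (hx : IsUnitAt P x) (n : ℕ) : IsUnitAt P (x ^ n) :=
  ⟨pow_ne_zero n hx.ne_zero, pow_mem hx.mem n, by rw [← inv_pow]; exact pow_mem hx.inv_mem n⟩

theorem zpow (hx : IsUnitAt P x) (n : ℤ) : IsUnitAt P (x ^ n) := by
  obtain ⟨n, rfl | rfl⟩ := n.eq_nat_or_neg
  · simpa using hx.pow n
  · simpa using (hx.pow n).inv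

theorem prod {ι : Type*} {s : Finset ι} {f : ι → K} (hf : ∀ i ∈ s, IsUnitAt P (f i)) :
    IsUnitAt P (∏ i ∈ s, f i) :=
  ⟨prod_ne_zero_iff.mpr fun i hi => (hf i hi).ne_zero, prod_mem fun i hi => (hf i hi).mem,
    by rw [← prod_inv_distrib]; exact prod_mem fun i hi => (hf i hi).inv_mem⟩

end IsUnitAt

namespace VanishesAt

variable {x y : K}

theorem zero : VanishesAt P (0 : K) := by simp [VanishesAt]

theorem of_dvd {f : R} (hf : P ∣ f) : VanishesAt P (algebraMap R K f) := by
  obtain ⟨g, rfl⟩ := hf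
  rw [VanishesAt, map_mul, mul_div_cancel_left₀ _ algebraMap_prime_ne_zero]
  exact Subalgebra.algebraMap_mem _ g

theorem add (hx : VanishesAt P x) (hy : VanishesAt P y) : VanishesAt P (x + y) := by
  rw [VanishesAt, add_div]; exact add_mem hx hy

theorem mul_left (hx : VanishesAt P x) (hy : y ∈ localSubalgebra K P) :
    VanishesAt P (y * x) := by
  rw [VanishesAt, mul_div_assoc]; exact mul_mem hy hx

theorem mul_right (hx : VanishesAt P x) (hy : y ∈ localSubalgebra K P) :
    VanishesAt P (x * y) := by
  rw [mul_comm]; exact hx.mul_left hy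

theorem sum {ι : Type*} {s : Finset ι} {f : ι → K} (hf : ∀ i ∈ s, VanishesAt P (f i)) :
    VanishesAt P (∑ i ∈ s, f i) := by
  rw [VanishesAt, sum_div]; exact sum_mem hf

theorem of_isUnitAt_mul {u : K} (hu : IsUnitAt P u) (hx : VanishesAt P (u * x)) :
    VanishesAt P x := by
  simpa [inv_mul_cancel_left₀ hu.ne_zero] using hx.mul_left hu.inv_mem

theorem div_mem (hx : VanishesAt P x) (hy : IsUnitAt P (y / algebraMap R K P)) :
    x / y ∈ localSubalgebra K P := by
  have hP0 := algebraMap_prime_ne_zero (K := K) (P := P)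
  have hy0 : y ≠ 0 := fun h => hy.ne_zero (by simp [h])
  rw [show x / y = x / algebraMap R K P * (y / algebraMap R K P)⁻¹ by field_simp]
  exact mul_mem hx hy.inv_mem

theorem exists_eq_div (hx : VanishesAt P x) :
    ∃ f g : R, P ∣ f ∧ ¬ P ∣ g ∧ x = algebraMap R K f / algebraMap R K g := by
  obtain ⟨f, g, hg, hfg⟩ := mem_localSubalgebra.mp hx
  refine ⟨P * f, g, dvd_mul_right P f, hg, ?_⟩
  rw [map_mul, mul_div_assoc, ← hfg, mul_div_cancel₀ _ algebraMap_prime_ne_zero]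

end VanishesAt

namespace CongrAt

variable {x x' y y' : K}

theorem mul_right (h : CongrAt P x y) {z : K} (hz : z ∈ localSubalgebra K P) :
    CongrAt P (x * z) (y * z) := by
  rw [CongrAt, ← sub_mul]; exact VanishesAt.mul_right h hz

theorem trans {z : K} (h₁ : CongrAt P x y) (h₂ : CongrAt P y z) : CongrAt P x z := by
  simpa [CongrAt] using VanishesAt.add h₁ h₂

theorem mul (hx : CongrAt P x x') (hy : CongrAt P y y') (hx' : x' ∈ localSubalgebra K P)
    (hy' : y ∈ localSubalgebra K P) : CongrAt P (x * y) (x' * y') := by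
  rw [CongrAt, show x * y - x' * y' = (x - x') * y + x' * (y - y') by ring]
  exact (VanishesAt.mul_right hx hy').add (hy.mul_left hx')

theorem prod {ι : Type*} [DecidableEq ι] {s : Finset ι} {f g : ι → K}
    (hfg : ∀ i ∈ s, CongrAt P (f i) (g i)) (hf : ∀ i ∈ s, f i ∈ localSubalgebra K P)
    (hg : ∀ i ∈ s, g i ∈ localSubalgebra K P) :
    CongrAt P (∏ i ∈ s, f i) (∏ i ∈ s, g i) := by
  induction s using Finset.induction with
  | empty => simpa [CongrAt] using VanishesAt.zero
  | insert j s hj ih =>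
    simp only [forall_mem_insert] at hfg hf hg
    rw [prod_insert hj, prod_insert hj]
    exact hfg.1.mul (ih hfg.2 hf.2 hg.2) hg.1 (prod_mem hf.2)

theorem div_of_isUnitAt {z : K} (h : CongrAt P x (z * y)) (hy : IsUnitAt P y) :
    CongrAt P (x / y) z := by
  rw [CongrAt, show x / y - z = (x - z * y) * y⁻¹ by field_simp [hy.ne_zero]]
  exact VanishesAt.mul_right h hy.inv_mem

end CongrAt

end LocalCalculus

theorem fracCongr_zero_of_forall_dvd {R K ι : Type*} [CommRing R] [IsDomain R]
    [UniqueFactorizationMonoid R] [Field K] [Algebra R K] [IsFractionRing R K] {s : Finset ι}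
    {P : ι → R} (hP : ∀ i ∈ s, Prime (P i))
    (hs : (s : Set ι).Pairwise (Function.onFun IsRelPrime P)) {x : K}
    (hx : ∀ i ∈ s, ∃ f g : R, P i ∣ f ∧ ¬ P i ∣ g ∧ x = algebraMap R K f / algebraMap R K g) :
    fracCongr x 0 (∏ i ∈ s, P i) := by
  set f := IsFractionRing.num R x
  set g := (IsFractionRing.den R x : R)
  have hfg : algebraMap R K f / algebraMap R K g = x := IsFractionRing.mk'_num_den' R x
  have hg : algebraMap R K g ≠ 0 :=
    IsFractionRing.to_map_eq_zero_iff.not.mpr (nonZeroDivisors.coe_ne_zero _)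
  have hdvd (i : ι) (hi : i ∈ s) : P i ∣ f ∧ ¬ P i ∣ g := by
    obtain ⟨f', g', hf', hg', hx'⟩ := hx i hi
    have hcross : f * g' = g * f' := IsFractionRing.injective R K <| by
      have h := hfg.trans hx'
      rw [div_eq_div_iff hg (algebraMap_ne_zero_of_not_dvd hg')] at h
      rw [map_mul, map_mul]; linear_combination h
    have hPf : P i ∣ f :=
      ((hP i hi).dvd_or_dvd (hcross ▸ dvd_mul_of_dvd_right hf' g)).resolve_right hg'
    exact ⟨hPf, fun hPg => (hP i hi).not_isUnit (IsFractionRing.num_den_reduced R x hPf hPg)⟩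
  refine ⟨f, g, IsRelPrime.prod_right fun i hi => ?_,
    prod_dvd_of_isRelPrime hs fun i hi => (hdvd i hi).1, by rw [sub_zero, hfg]⟩
  exact ((hP i hi).irreducible.isRelPrime_iff_not_dvd.mpr (hdvd i hi).2).symm

open Polynomial (cyclotomic)

notation "Pol₅" => MvPolynomial (Fin 5) ℚ

noncomputable def Φ (N : ℕ) : Pol₅ := Polynomial.aeval (MvPolynomial.X 0) (cyclotomic N ℚ)

section Cyclotomic

variable {N : ℕ}

theorem Φ_dvd_aeval_iff {p : Polynomial ℚ} :
    Φ N ∣ Polynomial.aeval (MvPolynomial.X 0) p ↔ cyclotomic N ℚ ∣ p := by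
  refine ⟨fun h => ?_, map_dvd _⟩
  simpa [Φ, ← Polynomial.aeval_algHom_apply] using
    map_dvd (MvPolynomial.aeval fun _ => (Polynomial.X : Polynomial ℚ)) h

variable [NeZero N]

theorem cyclotomic_dvd_iff_aeval_eq_zero {F : Type*} [Field F] [CharZero F] {ζ : F}
    (hζ : IsPrimitiveRoot ζ N) {p : Polynomial ℚ} :
    cyclotomic N ℚ ∣ p ↔ Polynomial.aeval ζ p = 0 := by
  rw [Polynomial.cyclotomic_eq_minpoly_rat hζ (NeZero.pos N), minpoly.dvd_iff]

theorem cyclotomic_dvd_X_pow_sub_one_iff {m : ℕ} :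
    cyclotomic N ℚ ∣ Polynomial.X ^ m - 1 ↔ N ∣ m := by
  have hζ := Complex.isPrimitiveRoot_exp N (NeZero.ne N)
  rw [cyclotomic_dvd_iff_aeval_eq_zero hζ, ← hζ.pow_eq_one_iff_dvd]
  simp [sub_eq_zero]

theorem not_cyclotomic_dvd_X_pow (m : ℕ) : ¬ cyclotomic N ℚ ∣ Polynomial.X ^ m := by
  have hζ := Complex.isPrimitiveRoot_exp N (NeZero.ne N)
  rw [cyclotomic_dvd_iff_aeval_eq_zero hζ]
  simp [hζ.ne_zero (NeZero.ne N)]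

theorem not_cyclotomic_mul_self_dvd_X_pow_sub_one {m : ℕ} (hm : m ≠ 0) :
    ¬ cyclotomic N ℚ * cyclotomic N ℚ ∣ Polynomial.X ^ m - 1 := fun h =>
  (Polynomial.cyclotomic.irreducible_rat (NeZero.pos N)).not_isUnit <|
    (by simpa using (Polynomial.separable_X_pow_sub_C (1 : ℚ) (by simpa using hm)
      one_ne_zero).squarefree : Squarefree (Polynomial.X ^ m - 1 : Polynomial ℚ)) _ h

theorem prime_Φ : Prime (Φ N) := by
  let E := (MvPolynomial.renameEquiv ℚ (_root_.finSuccEquiv 4)).trans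
    (MvPolynomial.optionEquivRight ℚ (Fin 4))
  have hE : E (Φ N) = MvPolynomial.C (cyclotomic N ℚ) := by
    have hX : E (MvPolynomial.X 0) = MvPolynomial.C Polynomial.X := by simp [E]
    rw [Φ, ← Polynomial.aeval_algHom_apply, hX, ← MvPolynomial.algebraMap_eq,
      Polynomial.aeval_algebraMap_apply, Polynomial.aeval_X_left_apply]
  rw [← MulEquiv.prime_iff E, hE, MvPolynomial.prime_C_iff]
  exact (Polynomial.cyclotomic.irreducible_rat (NeZero.pos N)).prime

instance : Fact (Prime (Φ N)) := ⟨prime_Φ⟩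

theorem not_Φ_dvd_of_aeval_eq_one {f : Pol₅} (v : Fin 5 → Pol₅) (hv : v 0 = MvPolynomial.X 0)
    (hf : MvPolynomial.aeval v f = 1) : ¬ Φ N ∣ f := fun h => by
  have hΦ : MvPolynomial.aeval v (Φ N) = Φ N := by
    rw [Φ, ← Polynomial.aeval_algHom_apply]; simp [hv]
  exact prime_Φ.not_dvd_one (hΦ ▸ hf ▸ map_dvd (MvPolynomial.aeval v) h)

end Cyclotomic
theorem one_sub_zpow_neg {F : Type*} [Field F] {y : F} (hy : y ≠ 0) (n : ℤ) :
    1 - y ^ (-n) = -y ^ (-n) * (1 - y ^ n) := by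
  rw [zpow_neg]; field_simp; ring

theorem one_sub_mul_zpow_neg {F : Type*} [Field F] {x y : F} (hx : x ≠ 0) (hy : y ≠ 0)
    (n : ℤ) :
    1 - x * y ^ (-n) = -(x * y ^ (-n)) * (1 - x⁻¹ * y ^ n) := by
  rw [zpow_neg]; field_simp; ring

theorem algebraMap_X_ne_zero (i : Fin 5) : algebraMap Pol₅ K5 (MvPolynomial.X i) ≠ 0 :=
  IsFractionRing.to_map_eq_zero_iff.not.mpr (MvPolynomial.X_ne_zero i)

theorem q_ne_zero : q ≠ 0 := algebraMap_X_ne_zero 0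

section Atoms

variable {N : ℕ} [NeZero N]

theorem aeval_q (p : Polynomial ℚ) :
    Polynomial.aeval q p = algebraMap Pol₅ K5 (Polynomial.aeval (MvPolynomial.X 0) p) :=
  Polynomial.aeval_algebraMap_apply K5 _ p

theorem isUnitAt_aeval_q {p : Polynomial ℚ} (hp : ¬ cyclotomic N ℚ ∣ p) :
    IsUnitAt (Φ N) (Polynomial.aeval q p) := by
  rw [aeval_q]; exact IsUnitAt.algebraMap (Φ_dvd_aeval_iff.not.mpr hp)

theorem vanishesAt_aeval_q {p : Polynomial ℚ} (hp : cyclotomic N ℚ ∣ p) :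
    VanishesAt (Φ N) (Polynomial.aeval q p) := by
  rw [aeval_q]; exact VanishesAt.of_dvd (Φ_dvd_aeval_iff.mpr hp)

theorem isUnitAt_q : IsUnitAt (Φ N) q := by
  simpa using isUnitAt_aeval_q (not_cyclotomic_dvd_X_pow (N := N) 1)

theorem one_sub_q_zpow_natCast (n : ℕ) :
    1 - q ^ (n : ℤ) = Polynomial.aeval q (-(Polynomial.X ^ n - 1 : Polynomial ℚ)) := by
  simp

theorem isUnitAt_one_sub_q_zpow {m : ℤ} (hm : ¬ (N : ℤ) ∣ m) :
    IsUnitAt (Φ N) (1 - q ^ m) := by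
  have hnat (n : ℕ) (hn : ¬ N ∣ n) : IsUnitAt (Φ N) (1 - q ^ (n : ℤ)) := by
    rw [one_sub_q_zpow_natCast]
    exact isUnitAt_aeval_q <| by rwa [dvd_neg, cyclotomic_dvd_X_pow_sub_one_iff]
  obtain ⟨n, rfl | rfl⟩ := m.eq_nat_or_neg
  · exact hnat n (by exact_mod_cast hm)
  · rw [one_sub_zpow_neg q_ne_zero]
    exact (isUnitAt_q.zpow _).neg.mul (hnat n (by simpa [Int.natCast_dvd_natCast] using hm))

theorem vanishesAt_one_sub_q_zpow {m : ℤ} (hm : (N : ℤ) ∣ m) :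
    VanishesAt (Φ N) (1 - q ^ m) := by
  have hnat (n : ℕ) (hn : N ∣ n) : VanishesAt (Φ N) (1 - q ^ (n : ℤ)) := by
    rw [one_sub_q_zpow_natCast]
    exact vanishesAt_aeval_q <| by rwa [dvd_neg, cyclotomic_dvd_X_pow_sub_one_iff]
  obtain ⟨n, rfl | rfl⟩ := m.eq_nat_or_neg
  · exact hnat n (by exact_mod_cast hm)
  · rw [one_sub_zpow_neg q_ne_zero]
    exact (hnat n (by simpa [Int.natCast_dvd_natCast] using hm)).mul_left
      (isUnitAt_q.zpow _).neg.mem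

theorem isUnitAt_one_sub_q_zpow_div {m : ℤ} (hm : (N : ℤ) ∣ m) (hm₀ : m ≠ 0) :
    IsUnitAt (Φ N) ((1 - q ^ m) / algebraMap Pol₅ K5 (Φ N)) := by
  have hnat (n : ℕ) (hn : N ∣ n) (hn₀ : n ≠ 0) :
      IsUnitAt (Φ N) ((1 - q ^ (n : ℤ)) / algebraMap Pol₅ K5 (Φ N)) := by
    obtain ⟨s, hs⟩ := cyclotomic_dvd_X_pow_sub_one_iff.mpr hn
    have hs' : ¬ cyclotomic N ℚ ∣ -s := fun h =>
      not_cyclotomic_mul_self_dvd_X_pow_sub_one hn₀ <| hs ▸ mul_dvd_mul_left _ (dvd_neg.mp h)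
    rw [one_sub_q_zpow_natCast, hs, ← mul_neg, map_mul, aeval_q (cyclotomic N ℚ), ← Φ,
      mul_div_cancel_left₀ _ algebraMap_prime_ne_zero]
    exact isUnitAt_aeval_q hs'
  obtain ⟨n, rfl | rfl⟩ := m.eq_nat_or_neg
  · exact hnat n (by exact_mod_cast hm) (by exact_mod_cast hm₀)
  · rw [one_sub_zpow_neg q_ne_zero, mul_div_assoc]
    exact (isUnitAt_q.zpow _).neg.mul
      (hnat n (by simpa [Int.natCast_dvd_natCast] using hm) (by simpa using hm₀))

theorem congrAt_q_zpow {m m' : ℤ} (h : (N : ℤ) ∣ m - m') :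
    CongrAt (Φ N) (q ^ m) (q ^ m') := by
  rw [CongrAt, show q ^ m - q ^ m' = -q ^ m' * (1 - q ^ (m - m')) by
    rw [zpow_sub₀ q_ne_zero]; field_simp [q_ne_zero]; ring]
  exact (vanishesAt_one_sub_q_zpow h).mul_left (isUnitAt_q.zpow m').neg.mem

variable {i : Fin 5} (hi : i ≠ 0)
include hi

theorem isUnitAt_X : IsUnitAt (Φ N) (algebraMap Pol₅ K5 (MvPolynomial.X i)) :=
  IsUnitAt.algebraMap <| not_Φ_dvd_of_aeval_eq_one (Function.update MvPolynomial.X i 1)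
    (Function.update_of_ne hi.symm _ _) (by simp)

theorem isUnitAt_one_sub_X_mul_q_pow (n : ℕ) :
    IsUnitAt (Φ N) (1 - algebraMap Pol₅ K5 (MvPolynomial.X i) * q ^ n) := by
  have h := IsUnitAt.algebraMap (K := K5) <|
    not_Φ_dvd_of_aeval_eq_one (N := N) (f := 1 - MvPolynomial.X i * MvPolynomial.X 0 ^ n)
      (Function.update MvPolynomial.X i 0) (Function.update_of_ne hi.symm _ _)
      (by simp [Function.update_of_ne hi.symm])
  simpa [q] using h

theorem isUnitAt_one_sub_X_inv_mul_q_pow (n : ℕ) :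
    IsUnitAt (Φ N) (1 - (algebraMap Pol₅ K5 (MvPolynomial.X i))⁻¹ * q ^ n) := by
  have h := IsUnitAt.algebraMap (K := K5) <|
    not_Φ_dvd_of_aeval_eq_one (N := N) (f := MvPolynomial.X i - MvPolynomial.X 0 ^ n)
      (Function.update MvPolynomial.X i (MvPolynomial.X 0 ^ n + 1))
      (Function.update_of_ne hi.symm _ _) (by simp [Function.update_of_ne hi.symm])
  rw [show 1 - (algebraMap Pol₅ K5 (MvPolynomial.X i))⁻¹ * q ^ n =
      (algebraMap Pol₅ K5 (MvPolynomial.X i) - q ^ n) / algebraMap Pol₅ K5 (MvPolynomial.X i) by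
    field_simp [algebraMap_X_ne_zero i]]
  simpa [q, div_eq_mul_inv] using h.mul (isUnitAt_X hi).inv

theorem isUnitAt_one_sub_X_mul_q_zpow (m : ℤ) :
    IsUnitAt (Φ N) (1 - algebraMap Pol₅ K5 (MvPolynomial.X i) * q ^ m) ∧
      IsUnitAt (Φ N) (1 - (algebraMap Pol₅ K5 (MvPolynomial.X i))⁻¹ * q ^ m) := by
  have hX := isUnitAt_X (N := N) hi
  obtain ⟨n, rfl | rfl⟩ := m.eq_nat_or_neg
  · simpa using ⟨isUnitAt_one_sub_X_mul_q_pow (N := N) hi n,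
      isUnitAt_one_sub_X_inv_mul_q_pow (N := N) hi n⟩
  · rw [one_sub_mul_zpow_neg hX.ne_zero q_ne_zero,
      one_sub_mul_zpow_neg (inv_ne_zero hX.ne_zero) q_ne_zero, inv_inv]
    exact ⟨(hX.mul (isUnitAt_q.zpow _)).neg.mul
        (by simpa using isUnitAt_one_sub_X_inv_mul_q_pow hi n),
      (hX.inv.mul (isUnitAt_q.zpow _)).neg.mul
        (by simpa using isUnitAt_one_sub_X_mul_q_pow hi n)⟩

end Atoms

noncomputable def param : Fin 6 → K5 := ![1, c, e, b⁻¹, a, a⁻¹]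

noncomputable def ratioFactor (d : ℕ) (r : ℤ) (x : K5) (i : ℕ) : K5 :=
  (1 - x * q ^ (r + d * i)) / (1 - x⁻¹ * q ^ ((d : ℤ) * (i + 1)))

theorem qPoch_mul_q_zpow (x : K5) (s : ℤ) (d k : ℕ) :
    qPoch (x * q ^ s) (q ^ d) k = ∏ i ∈ range k, (1 - x * q ^ (s + d * i)) := by
  refine prod_congr rfl fun i _ => ?_
  rw [zpow_add₀ q_ne_zero, ← pow_mul, ← zpow_natCast, mul_assoc]
  push_cast; rfl

theorem qPoch_div_qPoch_eq_prod_ratioFactor (d : ℕ) (r : ℤ) (x : K5) (k : ℕ) :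
    qPoch (x * q ^ r) (q ^ d) k / qPoch (x⁻¹ * q ^ (d : ℤ)) (q ^ d) k =
      ∏ i ∈ range k, ratioFactor d r x i := by
  rw [qPoch_mul_q_zpow, qPoch_mul_q_zpow, ← prod_div_distrib]
  refine prod_congr rfl fun i _ => ?_
  rw [ratioFactor]; ring_nf

theorem lemmaTerm_eq (d : ℕ) (r : ℤ) (k : ℕ) :
    lemmaTerm d r k = (1 - q ^ (2 * d * k + r : ℤ)) / (1 - q) *
      (∏ j, ∏ i ∈ range k, ratioFactor d r (param j) i) *
        (b / (c * e) * q ^ (2 * d - 3 * r)) ^ k := by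
  rw [mul_pow, ← zpow_natCast (q ^ (2 * (d : ℤ) - 3 * r)) k, ← zpow_mul]
  simp only [← qPoch_div_qPoch_eq_prod_ratioFactor, Fin.prod_univ_six, param, lemmaTerm, qIntZ,
    Matrix.cons_val_zero, Matrix.cons_val_one, Matrix.cons_val, one_mul, inv_one, inv_inv,
    zpow_natCast]
  ring_nf

section Params

variable {N : ℕ} [NeZero N]

theorem isUnitAt_param (j : Fin 6) : IsUnitAt (Φ N) (param j) := by
  fin_cases j
  exacts [IsUnitAt.one, isUnitAt_X (i := 3) (by decide), isUnitAt_X (i := 4) (by decide),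
    (isUnitAt_X (i := 2) (by decide)).inv, isUnitAt_X (i := 1) (by decide),
    (isUnitAt_X (i := 1) (by decide)).inv]

theorem isUnitAt_one_sub_param_mul_q_zpow {j : Fin 6} (hj : j ≠ 0) (m : ℤ) :
    IsUnitAt (Φ N) (1 - param j * q ^ m) ∧ IsUnitAt (Φ N) (1 - (param j)⁻¹ * q ^ m) := by
  fin_cases j
  · exact absurd rfl hj
  · exact isUnitAt_one_sub_X_mul_q_zpow (i := 3) (by decide) m
  · exact isUnitAt_one_sub_X_mul_q_zpow (i := 4) (by decide) m
  · show IsUnitAt _ (1 - b⁻¹ * q ^ m) ∧ IsUnitAt _ (1 - b⁻¹⁻¹ * q ^ m)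
    rw [inv_inv]
    exact (isUnitAt_one_sub_X_mul_q_zpow (i := 2) (by decide) m).symm
  · exact isUnitAt_one_sub_X_mul_q_zpow (i := 1) (by decide) m
  · show IsUnitAt _ (1 - a⁻¹ * q ^ m) ∧ IsUnitAt _ (1 - a⁻¹⁻¹ * q ^ m)
    rw [inv_inv]
    exact (isUnitAt_one_sub_X_mul_q_zpow (i := 1) (by decide) m).symm

theorem isUnitAt_prod_ratioFactor_param_succ (d : ℕ) (r : ℤ) (k : ℕ) :
    IsUnitAt (Φ N) (∏ j : Fin 5, ∏ i ∈ range k, ratioFactor d r (param j.succ) i) :=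
  IsUnitAt.prod fun j _ => IsUnitAt.prod fun _ _ =>
    (isUnitAt_one_sub_param_mul_q_zpow j.succ_ne_zero _).1.div
      (isUnitAt_one_sub_param_mul_q_zpow j.succ_ne_zero _).2

theorem isUnitAt_weight (d : ℕ) (r : ℤ) : IsUnitAt (Φ N) (b / (c * e) * q ^ (2 * d - 3 * r)) :=
  ((isUnitAt_X (i := 2) (by decide)).div ((isUnitAt_X (i := 3) (by decide)).mul
    (isUnitAt_X (i := 4) (by decide)))).mul (isUnitAt_q.zpow _)

end Params

theorem add_one_mod_cases {N : ℕ} (hN : 1 < N) (k : ℕ) :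
    (k % N + 1 = N ∧ (k + 1) % N = 0) ∨ (k % N + 1 < N ∧ (k + 1) % N = k % N + 1) := by
  have hmod := Nat.add_mod_eq_ite (k := N) (m := k) (n := 1)
  have hk := Nat.mod_lt k (by omega : 0 < N)
  rw [Nat.mod_eq_of_lt hN] at hmod
  split_ifs at hmod <;> omega

theorem int_dvd_mul_add_iff_of_mod_eq {N d m k : ℕ} (r : ℤ) (hk : k % N = m) :
    (N : ℤ) ∣ d * k + r ↔ (N : ℤ) ∣ d * m + r := by
  have hk' : (k : ℤ) = N * (k / N : ℕ) + m := by
    rw [← hk]; exact_mod_cast (Nat.div_add_mod k N).symm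
  rw [hk', show d * (N * (k / N : ℕ) + m : ℤ) + r = N * (d * (k / N : ℕ)) + (d * m + r) by
    ring]
  exact dvd_add_right (dvd_mul_right _ _)

theorem not_int_dvd_mul_of_coprime {N d i : ℕ} (hdN : d.Coprime N) (hi : ¬ N ∣ i) :
    ¬ (N : ℤ) ∣ d * i :=
  fun h => hi (hdN.symm.dvd_of_dvd_mul_left (by exact_mod_cast h))

section Residues

variable {N d m : ℕ} [NeZero N] {r : ℤ}

theorem ratioFactor_one (i : ℕ) :
    ratioFactor d r 1 i = (1 - q ^ (r + d * i)) / (1 - q ^ ((d : ℤ) * (i + 1))) := by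
  simp [ratioFactor]

theorem mem_and_vanishesAt_prod_ratioFactor_one (hN : N ≠ 1) (hdN : d.Coprime N) (hm : m < N)
    (hmr : (N : ℤ) ∣ d * m + r) (k : ℕ) :
    (∏ i ∈ range k, ratioFactor d r 1 i) ∈ localSubalgebra K5 (Φ N) ∧
      (m < k % N → VanishesAt (Φ N) (∏ i ∈ range k, ratioFactor d r 1 i)) := by
  induction k with
  | zero => simp
  | succ k ih =>
    obtain ⟨hmem, hvan⟩ := ih
    have hd : d ≠ 0 := by rintro rfl; exact hN (Nat.coprime_zero_left _ |>.mp hdN)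
    have hnum : 1 - q ^ (r + d * k) ∈ localSubalgebra K5 (Φ N) :=
      sub_mem (one_mem _) (isUnitAt_q.zpow _).mem
    have hnum_van (h : k % N = m) : VanishesAt (Φ N) (1 - q ^ (r + d * k)) :=
      vanishesAt_one_sub_q_zpow <| by
        rw [add_comm]; exact (int_dvd_mul_add_iff_of_mod_eq r h).mpr hmr
    rw [prod_range_succ, ratioFactor_one, ← mul_div_assoc]
    -- In each block of `N` indices, the numerator zero (index `≡ m`) comes no later than the
    -- denominator zero (index `≡ -1`).
    rcases add_one_mod_cases (by omega : 1 < N) k with ⟨hk, hk'⟩ | ⟨hk, hk'⟩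
    · have hden := isUnitAt_one_sub_q_zpow_div (N := N) (m := d * (k + 1))
        (by exact_mod_cast dvd_mul_of_dvd_right (Nat.dvd_of_mod_eq_zero hk') d)
        (by positivity)
      refine ⟨?_, fun h => absurd h (by omega)⟩
      rcases (by omega : m = k % N ∨ m < k % N) with h | h
      · rw [mul_div_assoc]
        exact mul_mem hmem ((hnum_van h.symm).div_mem hden)
      · exact ((hvan h).mul_right hnum).div_mem hden
    · have hden := isUnitAt_one_sub_q_zpow (N := N) (m := d * (k + 1))
        (by exact_mod_cast not_int_dvd_mul_of_coprime hdN fun h => by omega)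
      rw [div_eq_mul_inv, hk']
      refine ⟨mul_mem (mul_mem hmem hnum) hden.inv_mem,
        fun h => VanishesAt.mul_right ?_ hden.inv_mem⟩
      rcases (by omega : m = k % N ∨ m < k % N) with h | h
      · exact (hnum_van h.symm).mul_left hmem
      · exact (hvan h).mul_right hnum

end Residues

theorem prod_range_zpow_add_mul {F : Type*} [Field F] {x : F} (hx : x ≠ 0) (α β : ℤ)
    (t : ℕ) :
    ∏ i ∈ range t, x ^ (α + 2 * β * i) = x ^ (α * t + β * t * (t - 1)) := by
  induction t with
  | zero => simp
  | succ t ih =>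
    rw [prod_range_succ, ih, ← zpow_add₀ hx]
    push_cast; ring_nf

theorem prod_neg_param_mul_weight_pow (d : ℕ) (r : ℤ) (k t : ℕ) :
    (∏ j, ∏ i ∈ range t, -(param j * q ^ (r + d * (k + i : ℕ)))) *
      (b / (c * e) * q ^ (2 * d - 3 * r)) ^ t =
        q ^ ((3 * r + 6 * d * k + 2 * d) * t + 3 * d * t * (t - 1)) := by
  have ha : a ≠ 0 := algebraMap_X_ne_zero 1
  have hb : b ≠ 0 := algebraMap_X_ne_zero 2
  have hc : c ≠ 0 := algebraMap_X_ne_zero 3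
  have he : e ≠ 0 := algebraMap_X_ne_zero 4
  rw [prod_comm, ← prod_range_zpow_add_mul q_ne_zero, ← card_range t, ← prod_const,
    card_range, ← prod_mul_distrib]
  refine prod_congr rfl fun i _ => ?_
  rw [show 3 * r + 6 * d * k + 2 * d + 2 * (3 * d) * i =
      (r + d * (k + i : ℕ)) * 6 + (2 * d - 3 * r) by push_cast; ring,
    zpow_add₀ q_ne_zero _ (2 * d - 3 * r), zpow_mul _ _ 6]
  generalize q ^ (r + d * (k + i : ℕ)) = Q
  generalize q ^ (2 * d - 3 * r) = W
  simp only [param, Fin.prod_univ_six, Matrix.cons_val_zero, Matrix.cons_val_one,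
    Matrix.cons_val, one_mul, mul_neg, neg_mul, neg_neg, zpow_ofNat]
  field_simp

section Pairing

variable {N d : ℕ} [NeZero N] {r : ℤ}

theorem congrAt_one_sub_mul_q_zpow {x : K5} (hx : x ≠ 0) {E₁ E₂ : ℤ}
    (h : (N : ℤ) ∣ E₁ + E₂) :
    CongrAt (Φ N) (1 - x * q ^ E₁) (-(x * q ^ E₁) * (1 - x⁻¹ * q ^ E₂)) := by
  rw [CongrAt, show 1 - x * q ^ E₁ - -(x * q ^ E₁) * (1 - x⁻¹ * q ^ E₂) = 1 - q ^ (E₁ + E₂) by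
    rw [zpow_add₀ q_ne_zero]; field_simp; ring]
  exact vanishesAt_one_sub_q_zpow h

theorem congrAt_prod_ratioFactor {x : K5} (hx : IsUnitAt (Φ N) x) {k t : ℕ}
    (hS : (N : ℤ) ∣ r + d * (2 * k + t))
    (hden : ∀ i < t, IsUnitAt (Φ N) (1 - x⁻¹ * q ^ ((d : ℤ) * ((k + i : ℕ) + 1)))) :
    CongrAt (Φ N) (∏ i ∈ range t, ratioFactor d r x (k + i))
      (∏ i ∈ range t, -(x * q ^ (r + d * (k + i : ℕ)))) := by
  have hq (n : ℤ) := (isUnitAt_q (N := N)).zpow n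
  have hnum : CongrAt (Φ N) (∏ i ∈ range t, (1 - x * q ^ (r + d * (k + i : ℕ))))
      ((∏ i ∈ range t, -(x * q ^ (r + d * (k + i : ℕ)))) *
        ∏ i ∈ range t, (1 - x⁻¹ * q ^ ((d : ℤ) * ((k + i : ℕ) + 1)))) := by
    -- Reflecting `i ↦ t - 1 - i` matches each numerator factor with a denominator factor whose
    -- exponent completes it to `r + d(2k + t) ≡ 0`.
    rw [← prod_range_reflect (fun i => 1 - x⁻¹ * q ^ ((d : ℤ) * ((k + i : ℕ) + 1))) t,
      ← prod_mul_distrib]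
    refine CongrAt.prod (fun i hi => congrAt_one_sub_mul_q_zpow hx.ne_zero ?_)
      (fun i _ => sub_mem (one_mem _) (mul_mem hx.mem (hq _).mem))
      (fun i _ => mul_mem (neg_mem (mul_mem hx.mem (hq _).mem))
        (sub_mem (one_mem _) (mul_mem hx.inv_mem (hq _).mem)))
    have hi : ((k + (t - 1 - i) : ℕ) : ℤ) = k + t - 1 - i := by have := mem_range.mp hi; omega
    convert hS using 1
    push_cast [hi]; ring
  simp only [ratioFactor, prod_div_distrib]
  exact hnum.div_of_isUnitAt (IsUnitAt.prod fun i hi => hden i (mem_range.mp hi))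

theorem congrAt_pairing (hdN : d.Coprime N) {k t : ℕ} (hS : (N : ℤ) ∣ r + d * (2 * k + t))
    (hden : ∀ i < t, ¬ N ∣ k + i + 1) :
    CongrAt (Φ N) ((∏ j, ∏ i ∈ range t, ratioFactor d r (param j) (k + i)) *
      (b / (c * e) * q ^ (2 * d - 3 * r)) ^ t) (q ^ (2 * d * k + r : ℤ)) := by
  have hq (n : ℤ) := (isUnitAt_q (N := N)).zpow n
  have hden' (j : Fin 6) (i : ℕ) (hi : i < t) :
      IsUnitAt (Φ N) (1 - (param j)⁻¹ * q ^ ((d : ℤ) * ((k + i : ℕ) + 1))) := by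
    by_cases hj : j = 0
    · have h := not_int_dvd_mul_of_coprime hdN (hden i hi)
      push_cast at h ⊢
      simpa [hj, param] using isUnitAt_one_sub_q_zpow h
    · exact (isUnitAt_one_sub_param_mul_q_zpow hj _).2
  have hsegment : CongrAt (Φ N) (∏ j, ∏ i ∈ range t, ratioFactor d r (param j) (k + i))
      (∏ j, ∏ i ∈ range t, -(param j * q ^ (r + d * (k + i : ℕ)))) :=
    CongrAt.prod (fun j _ => congrAt_prod_ratioFactor (isUnitAt_param j) hS (hden' j))
      (fun j _ => prod_mem fun i hi => mul_mem (sub_mem (one_mem _)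
        (mul_mem (isUnitAt_param j).mem (hq _).mem)) (hden' j i (mem_range.mp hi)).inv_mem)
      (fun j _ => prod_mem fun i _ => neg_mem (mul_mem (isUnitAt_param j).mem (hq _).mem))
  refine (hsegment.mul_right ((isUnitAt_weight d r).pow t).mem).trans ?_
  rw [prod_neg_param_mul_weight_pow]
  refine congrAt_q_zpow ?_
  rw [show (3 * r + 6 * d * k + 2 * d) * t + 3 * d * t * (t - 1) - (2 * d * k + r) =
    (3 * t - 1) * (r + d * (2 * k + t)) by ring]
  exact hS.mul_left _

end Pairing

section Vanishing

variable {N d m : ℕ} [NeZero N] {r : ℤ}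

theorem isUnitAt_one_sub_q (hN : N ≠ 1) : IsUnitAt (Φ N) (1 - q) := by
  simpa using isUnitAt_one_sub_q_zpow (N := N) (m := 1) (by exact_mod_cast mt Nat.dvd_one.mp hN)

theorem isUnitAt_two : IsUnitAt (Φ N) (2 : K5) := by
  have h2 : IsUnit (2 : Pol₅) := by
    simpa only [map_ofNat] using
      (isUnit_iff_ne_zero.mpr (two_ne_zero : (2 : ℚ) ≠ 0)).map (algebraMap ℚ Pol₅)
  rw [← map_ofNat (algebraMap Pol₅ K5) 2]
  exact IsUnitAt.algebraMap fun h => prime_Φ.not_isUnit (isUnit_of_dvd_unit h h2)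

theorem div_one_sub_q_mem (hN : N ≠ 1) (u : ℤ) :
    (1 - q ^ u) / (1 - q) ∈ localSubalgebra K5 (Φ N) :=
  mul_mem (sub_mem (one_mem _) (isUnitAt_q.zpow u).mem) (isUnitAt_one_sub_q hN).inv_mem

variable (hN : N ≠ 1) (hdN : d.Coprime N) (hm : m < N) (hmr : (N : ℤ) ∣ d * m + r)
include hN hdN hm hmr

theorem prod_ratioFactor_param_mem (k : ℕ) :
    (∏ j, ∏ i ∈ range k, ratioFactor d r (param j) i) ∈ localSubalgebra K5 (Φ N) := by
  rw [Fin.prod_univ_succ]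
  exact mul_mem (mem_and_vanishesAt_prod_ratioFactor_one hN hdN hm hmr k).1
    (isUnitAt_prod_ratioFactor_param_succ d r k).mem

theorem vanishesAt_lemmaTerm {k : ℕ} (hk : m < k % N) : VanishesAt (Φ N) (lemmaTerm d r k) := by
  rw [lemmaTerm_eq, Fin.prod_univ_succ]
  exact ((((mem_and_vanishesAt_prod_ratioFactor_one hN hdN hm hmr k).2 hk).mul_right
    (isUnitAt_prod_ratioFactor_param_succ d r k).mem).mul_left (div_one_sub_q_mem hN _)).mul_right
    ((isUnitAt_weight d r).pow k).mem

theorem vanishesAt_lemmaTerm_add_lemmaTerm (u : ℕ) {s t : ℕ} (hst : 2 * s + t = m) :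
    VanishesAt (Φ N) (lemmaTerm d r (N * u + s) + lemmaTerm d r (N * u + s + t)) := by
  set k := N * u + s
  have hS : (N : ℤ) ∣ r + d * (2 * k + t) := by
    rw [show r + d * (2 * k + t : ℤ) = (d * m + r) + N * (2 * d * u) by
      simp only [k, ← hst]; push_cast; ring]
    exact dvd_add hmr (dvd_mul_right _ _)
  have hden (i : ℕ) (hi : i < t) : ¬ N ∣ k + i + 1 := fun h => by
    have h' : N ∣ s + i + 1 :=
      (Nat.dvd_add_right (dvd_mul_right N u)).mp (by simpa [k, add_assoc] using h)
    exact absurd (Nat.le_of_dvd (by omega) h') (by omega)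
  set w := b / (c * e) * q ^ (2 * d - 3 * r)
  set H := (∏ j, ∏ i ∈ range t, ratioFactor d r (param j) (k + i)) * w ^ t
  have hbracket : VanishesAt (Φ N)
      ((1 - q ^ (2 * d * k + r : ℤ)) + (1 - q ^ (2 * d * (k + t : ℕ) + r : ℤ)) * H) := by
    rw [show (1 - q ^ (2 * d * k + r : ℤ)) + (1 - q ^ (2 * d * (k + t : ℕ) + r : ℤ)) * H =
        (1 - q ^ (2 * (r + d * (2 * k + t)))) +
          (1 - q ^ (2 * d * (k + t : ℕ) + r : ℤ)) * (H - q ^ (2 * d * k + r : ℤ)) by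
      rw [show 2 * (r + d * (2 * k + t : ℤ)) = (2 * d * (k + t : ℕ) + r) + (2 * d * k + r) by
        push_cast; ring, zpow_add₀ q_ne_zero (2 * d * (k + t : ℕ) + r)]
      ring]
    exact (vanishesAt_one_sub_q_zpow (hS.mul_left 2)).add ((congrAt_pairing hdN hS hden).mul_left
      (sub_mem (one_mem _) (isUnitAt_q.zpow _).mem))
  have hsplit : lemmaTerm d r k + lemmaTerm d r (k + t) =
      (1 - q)⁻¹ * (∏ j, ∏ i ∈ range k, ratioFactor d r (param j) i) * w ^ k *
        ((1 - q ^ (2 * d * k + r : ℤ)) + (1 - q ^ (2 * d * (k + t : ℕ) + r : ℤ)) * H) := by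
    rw [lemmaTerm_eq, lemmaTerm_eq]
    simp only [prod_range_add, prod_mul_distrib, pow_add, H, w]
    ring
  rw [hsplit]
  exact hbracket.mul_left (mul_mem (mul_mem (isUnitAt_one_sub_q hN).inv_mem
    (prod_ratioFactor_param_mem hN hdN hm hmr k)) ((isUnitAt_weight d r).pow k).mem)

end Vanishing

def blockReflect (N m k : ℕ) : ℕ := if k % N ≤ m then N * (k / N) + (m - k % N) else k

section BlockReflect

variable {N m : ℕ}

theorem mul_add_mod_and_div {u s : ℕ} (hs : s < N) :
    (N * u + s) % N = s ∧ (N * u + s) / N = u :=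
  ⟨by rw [Nat.mul_add_mod, Nat.mod_eq_of_lt hs],
    by rw [Nat.mul_add_div (by omega), Nat.div_eq_of_lt hs, add_zero]⟩

theorem blockReflect_blockReflect (hm : m < N) (k : ℕ) :
    blockReflect N m (blockReflect N m k) = k := by
  by_cases hk : k % N ≤ m
  · obtain ⟨h1, h2⟩ := mul_add_mod_and_div (u := k / N) (by omega : m - k % N < N)
    simp only [blockReflect, if_pos hk, h1, h2, if_pos (by omega : m - k % N ≤ m)]
    have := Nat.div_add_mod k N
    omega
  · simp only [blockReflect, if_neg hk]

theorem blockReflect_le {M k : ℕ} (hM : M % N = m) (hk : k ≤ M) : blockReflect N m k ≤ M := by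
  unfold blockReflect
  split_ifs with h
  · have hkM : k / N ≤ M / N := Nat.div_le_div_right hk
    have := Nat.div_add_mod M N
    rcases hkM.lt_or_eq with hlt | heq
    · have := Nat.mul_le_mul_left N (Nat.succ_le_of_lt hlt)
      rw [Nat.mul_succ] at this
      omega
    · rw [heq]; omega
  · exact hk

end BlockReflect

theorem vanishesAt_lemmaTerm_add_lemmaTerm_blockReflect {N d m : ℕ} [NeZero N] {r : ℤ}
    (hN : N ≠ 1) (hdN : d.Coprime N) (hm : m < N) (hmr : (N : ℤ) ∣ d * m + r) (k : ℕ) :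
    VanishesAt (Φ N) (lemmaTerm d r k + lemmaTerm d r (blockReflect N m k)) := by
  obtain ⟨u, s, hs, rfl⟩ : ∃ u s, s < N ∧ k = N * u + s :=
    ⟨k / N, k % N, Nat.mod_lt k (NeZero.pos N), (Nat.div_add_mod k N).symm⟩
  obtain ⟨h1, h2⟩ := mul_add_mod_and_div (u := u) hs
  by_cases hsm : s ≤ m
  · rw [show blockReflect N m (N * u + s) = N * u + (m - s) by
      simp only [blockReflect, h1, h2, if_pos hsm]]
    rcases le_total (2 * s) m with h | h
    · have := vanishesAt_lemmaTerm_add_lemmaTerm hN hdN hm hmr u (s := s) (t := m - 2 * s)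
        (by omega)
      rwa [show N * u + s + (m - 2 * s) = N * u + (m - s) by omega] at this
    · have := vanishesAt_lemmaTerm_add_lemmaTerm hN hdN hm hmr u (s := m - s) (t := 2 * s - m)
        (by omega)
      rwa [show N * u + (m - s) + (2 * s - m) = N * u + s by omega, add_comm] at this
  · rw [show blockReflect N m (N * u + s) = N * u + s by simp only [blockReflect, h1, if_neg hsm]]
    have := vanishesAt_lemmaTerm hN hdN hm hmr (k := N * u + s) (by omega)
    exact this.add this

theorem vanishesAt_sum_lemmaTerm {N d : ℕ} [NeZero N] {r : ℤ} (hN : N ≠ 1) (hdN : d.Coprime N)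
    {M : ℕ} (hM : (N : ℤ) ∣ d * M + r) :
    VanishesAt (Φ N) (∑ k ∈ range (M + 1), lemmaTerm d r k) := by
  set m := M % N with hm_def
  have hm : m < N := Nat.mod_lt M (NeZero.pos N)
  have hmr : (N : ℤ) ∣ d * m + r := (int_dvd_mul_add_iff_of_mod_eq r hm_def.symm).mp hM
  have hσ (k : ℕ) (hk : k ∈ range (M + 1)) : blockReflect N m k ∈ range (M + 1) :=
    mem_range_succ_iff.mpr (blockReflect_le hm_def.symm (mem_range_succ_iff.mp hk))
  have htwice : 2 * ∑ k ∈ range (M + 1), lemmaTerm d r k =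
      ∑ k ∈ range (M + 1), (lemmaTerm d r k + lemmaTerm d r (blockReflect N m k)) := by
    rw [two_mul, sum_add_distrib]
    congr 1
    exact sum_nbij' _ _ hσ hσ (fun k _ => blockReflect_blockReflect hm k)
      (fun k _ => blockReflect_blockReflect hm k) fun k _ => by rw [blockReflect_blockReflect hm]
  exact VanishesAt.of_isUnitAt_mul isUnitAt_two <| htwice ▸ VanishesAt.sum fun k _ =>
    vanishesAt_lemmaTerm_add_lemmaTerm_blockReflect hN hdN hm hmr k

theorem stmt5_general (d n : ℕ) (hn : 0 < n) (hgcd : Nat.gcd d n = 1) (r : ℤ)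
    (m₁ : ℕ) (hm₁' : ((d : ℤ) * m₁) ≡ -r [ZMOD (n : ℤ)]) :
    fracCongr
      (∑ k ∈ Finset.range (m₁ + 1), lemmaTerm d r k)
      0
      (∑ i ∈ Finset.range n, (MvPolynomial.X 0 : MvPolynomial (Fin 5) ℚ) ^ i) := by
  have hprod :
      ∑ i ∈ range n, (MvPolynomial.X 0 : Pol₅) ^ i = ∏ j ∈ n.divisors.erase 1, Φ j := by
    simpa [Φ] using congrArg (Polynomial.aeval (MvPolynomial.X 0 : Pol₅))
      (Polynomial.prod_cyclotomic_eq_geom_sum hn ℚ).symm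
  have hn_dvd : (n : ℤ) ∣ d * m₁ + r := by simpa using hm₁'.dvd.neg_right
  rw [hprod]
  refine fracCongr_zero_of_forall_dvd (fun j hj => ?_) (fun i _ j _ hij => ?_) fun j hj => ?_
  · have : NeZero j := ⟨(Nat.pos_of_mem_divisors (mem_erase.mp hj).2).ne'⟩
    exact prime_Φ
  · exact ((Polynomial.cyclotomic.isCoprime_rat hij).map
      (Polynomial.aeval (MvPolynomial.X 0 : Pol₅)).toRingHom).isRelPrime
  · obtain ⟨hj1, hjn⟩ := mem_erase.mp hj
    have hj := Nat.dvd_of_mem_divisors hjn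
    have : NeZero j := ⟨(Nat.pos_of_mem_divisors hjn).ne'⟩
    exact (vanishesAt_sum_lemmaTerm hj1 (Nat.Coprime.coprime_dvd_right hj hgcd)
      ((Int.natCast_dvd_natCast.mpr hj).trans hn_dvd)).exists_eq_div

theorem stmt5 (d n : ℕ) (hd : 0 < d) (hn : 0 < n) (hgcd : Nat.gcd d n = 1) (r : ℤ)
    (m₁ : ℕ) (hm₁ : m₁ ≤ n - 1) (hm₁' : ((d : ℤ) * m₁) ≡ -r [ZMOD (n : ℤ)]) :
    fracCongr
      (∑ k ∈ Finset.range (m₁ + 1), lemmaTerm d r k)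
      0
      (∑ i ∈ Finset.range n, (MvPolynomial.X 0 : MvPolynomial (Fin 5) ℚ) ^ i) :=
  stmt5_general d n hn hgcd r m₁ hm₁'
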